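/- Let ℓ ≥ 2 be an even integer, and let k, n be positive integers with w = n + k. Then ∑_{i=0}^{k} (n+i)^ℓ = ∑_{i=k+1}^{2k} (n+i)^ℓ holds if and only if w^{ℓ−1} = 2 ∑_{m odd, 1 ≤ m ≤ ℓ} binom(ℓ, m) · w^{ℓ−m−1} · ∑_{i=1}^{k} i^m. -/

import Mathlib

/-!
With `w = n + k`, the left side of (1) is `w^ℓ + ∑_{j=1}^k (w - j)^ℓ` and the right side is
`∑_{j=1}^k (w + j)^ℓ`. Only the odd powers of `j` survive in `(w + j)^ℓ - (w - j)^ℓ`, so (1) says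
`w^ℓ = 2 ∑_{m odd} C(ℓ,m) w^{ℓ-m} ∑_{j=1}^k j^m`. As `ℓ` is even, every odd `m ≤ ℓ` is `< ℓ`, so
the right side is `w` times the right side of the claim, and `w > 0` cancels.
-/

open Finset

theorem add_pow_sub_sub_pow {R : Type*} [CommRing R] (x y : R) (ℓ : ℕ) :
    (x + y) ^ ℓ - (x - y) ^ ℓ =
      2 * ∑ m ∈ (range (ℓ + 1)).filter (fun m => Odd m), (ℓ.choose m : R) * x ^ (ℓ - m) * y ^ m := by
  rw [add_comm x, add_pow, sub_eq_add_neg x, add_comm x, add_pow, ← sum_sub_distrib, sum_filter,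
    mul_sum]
  refine sum_congr rfl fun m _ => ?_
  rcases Nat.even_or_odd m with hm | hm
  · rw [if_neg (Nat.not_odd_iff_even.mpr hm), hm.neg_pow]; ring
  · rw [if_pos hm, hm.neg_pow]; ring

theorem sum_add_pow_sub_sub_pow {ι R : Type*} [CommRing R] (s : Finset ι) (x : R) (y : ι → R)
    (ℓ : ℕ) :
    ∑ j ∈ s, ((x + y j) ^ ℓ - (x - y j) ^ ℓ) =
      2 * ∑ m ∈ (range (ℓ + 1)).filter (fun m => Odd m),
        (ℓ.choose m : R) * x ^ (ℓ - m) * ∑ j ∈ s, y j ^ m := by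
  simp_rw [add_pow_sub_sub_pow, ← mul_sum]
  rw [sum_comm]
  simp_rw [mul_sum]

theorem Even.sum_odd_choose_mul_pow_sub {R : Type*} [CommSemiring R] {ℓ : ℕ} (hℓ : Even ℓ)
    (x : R) (c : ℕ → R) :
    ∑ m ∈ (range (ℓ + 1)).filter (fun m => Odd m), (ℓ.choose m : R) * x ^ (ℓ - m) * c m =
      x * ∑ m ∈ (range (ℓ + 1)).filter (fun m => Odd m),
        (ℓ.choose m : R) * x ^ (ℓ - m - 1) * c m := by
  rw [mul_sum]
  refine sum_congr rfl fun m hm => ?_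
  obtain ⟨hmℓ, hodd⟩ := mem_filter.mp hm
  have hlt : m < ℓ := lt_of_le_of_ne (Nat.lt_succ_iff.mp (mem_range.mp hmℓ))
    fun h => Nat.not_even_iff_odd.mpr hodd (h ▸ hℓ)
  rw [← mul_pow_sub_one (Nat.sub_ne_zero_of_lt hlt) x]
  ring

theorem sum_range_succ_comp_add_reflect {M : Type*} [AddCommMonoid M] (f : ℤ → M) (n : ℤ)
    (k : ℕ) :
    ∑ i ∈ range (k + 1), f (n + i) = f (n + k) + ∑ j ∈ Icc 1 k, f (n + k - j) := by
  induction k generalizing n with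
  | zero => simp
  | succ k ih =>
    have h := ih (n + 1)
    rw [sum_range_succ', sum_Icc_succ_top (by omega)]
    push_cast at h ⊢
    simp only [add_zero, ← add_assoc]
    simp only [add_right_comm n 1] at h
    rw [h, show n + k + 1 - (k + 1) = n by ring, add_assoc]

theorem sum_Icc_add_left_comp {M : Type*} [AddCommMonoid M] (f : ℕ → M) (a b c : ℕ) :
    ∑ i ∈ Icc (c + a) (c + b), f i = ∑ j ∈ Icc a b, f (c + j) := by
  rw [← map_add_left_Icc, sum_map]
  rfl

theorem eq_iff_even_case_general (ℓ k n w : ℕ) (hℓ : 2 ≤ ℓ) (heven : Even ℓ)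
    (hn : 0 < n) (hw : w = n + k) :
    (∑ i ∈ Finset.range (k + 1), (n + i) ^ ℓ =
        ∑ i ∈ Finset.Icc (k + 1) (2 * k), (n + i) ^ ℓ) ↔
      w ^ (ℓ - 1) = 2 * ∑ m ∈ (Finset.range (ℓ + 1)).filter (fun m => Odd m),
        ℓ.choose m * w ^ (ℓ - m - 1) * ∑ i ∈ Finset.Icc 1 k, i ^ m := by
  rw [two_mul, sum_Icc_add_left_comp]
  zify
  have hwZ : (w : ℤ) = n + k := by rw [hw, Nat.cast_add]
  have hlow : ∑ i ∈ range (k + 1), ((n : ℤ) + i) ^ ℓ =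
      (w : ℤ) ^ ℓ + ∑ j ∈ Icc 1 k, ((w : ℤ) - j) ^ ℓ := by
    rw [hwZ]; exact sum_range_succ_comp_add_reflect (· ^ ℓ) n k
  have hhigh : ∑ j ∈ Icc 1 k, ((n : ℤ) + (k + j)) ^ ℓ = ∑ j ∈ Icc 1 k, ((w : ℤ) + j) ^ ℓ := by
    simp only [hwZ, add_assoc]
  have hw0 : (w : ℤ) ≠ 0 := by omega
  rw [hlow, hhigh, ← eq_sub_iff_add_eq, ← sum_sub_distrib, sum_add_pow_sub_sub_pow,
    heven.sum_odd_choose_mul_pow_sub, mul_left_comm, ← mul_pow_sub_one (by omega) (w : ℤ),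
    mul_right_inj' hw0]

/-- For even `ℓ ≥ 2`, with `w = n + k`, equation (1) holds iff
`w^{ℓ-1} = 2 ∑_{m odd, 1 ≤ m ≤ ℓ} C(ℓ,m) w^{ℓ-m-1} ∑_{i=1}^k i^m`. -/
theorem eq_iff_even_case (ℓ k n w : ℕ) (hℓ : 2 ≤ ℓ) (heven : Even ℓ)
    (hk : 0 < k) (hn : 0 < n) (hw : w = n + k) :
    (∑ i ∈ Finset.range (k + 1), (n + i) ^ ℓ =
        ∑ i ∈ Finset.Icc (k + 1) (2 * k), (n + i) ^ ℓ) ↔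
      w ^ (ℓ - 1) = 2 * ∑ m ∈ (Finset.range (ℓ + 1)).filter (fun m => Odd m),
        ℓ.choose m * w ^ (ℓ - m - 1) * ∑ i ∈ Finset.Icc 1 k, i ^ m :=
  eq_iff_even_case_general ℓ k n w hℓ heven hn hw
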